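/- arXiv:2405.20124 — 4 statements merged into one kernel-verified Lean document; each statement's English description precedes it below -/
import Mathlib

section
/- Assume Assumption 1 (the minimum of the primal problem (CSE) equals the maximum of the dual problem). Then: (i) if Σ* solves (P_Mat), then X* = Σ* solves (CSE) and Σ* solves the dual problem; (ii) if X* solves (CSE) and Σ* solves the dual problem, then X* = Σ* and X* solves (P_Mat). -/
open Matrix Set Filter MeasureTheory
open scoped BigOperators Classical

noncomputable section

/-- The space of real `p × p` matrices. -/
abbrev Mat (p : ℕ) := Matrix (Fin p) (Fin p) ℝ

/-- Orthogonal matrix. -/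
def IsOrthoMat {p : ℕ} (V : Mat p) : Prop := V * Vᵀ = 1

/-- The loss function `Tr(X²) − 2 Tr(Σ X)` of the estimation problem. -/
def cseLoss {p : ℕ} (X S : Mat p) : ℝ := (X * X).trace - 2 * (S * X).trace

/-- Squared Frobenius norm. -/
def frobSq {p : ℕ} (X : Mat p) : ℝ := (Xᵀ * X).trace

/-- Feasibility for the uncertainty set `B_ε(Σ̂)`. -/
def Feas {p : ℕ} (D : Mat p → Mat p → EReal) (Sh : Mat p) (ε : ℝ) (S : Mat p) : Prop :=
  S.PosSemidef ∧ D S Sh ≤ (ε : EReal)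

/-- The worst-case (primal) objective of the problem (CSE). -/
def primalVal {p : ℕ} (D : Mat p → Mat p → EReal) (Sh : Mat p) (ε : ℝ) (X : Mat p) : EReal :=
  ⨆ S : {S : Mat p // Feas D Sh ε S}, (cseLoss X S.1 : EReal)

/-- The inner (dual) objective. -/
def dualVal {p : ℕ} (S : Mat p) : EReal :=
  ⨅ X : {X : Mat p // X.PosSemidef}, (cseLoss X.1 S : EReal)

/-- `X` solves the primal problem (CSE). -/
def IsCSESol {p : ℕ} (D : Mat p → Mat p → EReal) (Sh : Mat p) (ε : ℝ) (X : Mat p) : Prop :=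
  X.PosSemidef ∧ ∀ Y : Mat p, Y.PosSemidef → primalVal D Sh ε X ≤ primalVal D Sh ε Y

/-- `S` solves the dual problem. -/
def IsDualSol {p : ℕ} (D : Mat p → Mat p → EReal) (Sh : Mat p) (ε : ℝ) (S : Mat p) : Prop :=
  Feas D Sh ε S ∧ ∀ T : Mat p, Feas D Sh ε T → dualVal T ≤ dualVal S

/-- `S` solves the problem (P_Mat). -/
def IsPMatSol {p : ℕ} (D : Mat p → Mat p → EReal) (Sh : Mat p) (ε : ℝ) (S : Mat p) : Prop :=
  Feas D Sh ε S ∧ ∀ T : Mat p, Feas D Sh ε T → frobSq S ≤ frobSq T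

/-- Assumption 1 (minimax): the optimal value of (CSE) equals the optimal value of the dual. -/
def MinimaxEq {p : ℕ} (D : Mat p → Mat p → EReal) (Sh : Mat p) (ε : ℝ) : Prop :=
  (⨅ X : {X : Mat p // X.PosSemidef}, primalVal D Sh ε X.1)
    = ⨆ S : {S : Mat p // Feas D Sh ε S}, dualVal S.1

/-- `x` solves the problem (P_Vec). -/
def IsPVecSol {p : ℕ} (d : ℝ → ℝ → EReal) (xh : Fin p → ℝ) (ε : ℝ) (x : Fin p → ℝ) : Prop :=
  (∀ i, 0 ≤ x i) ∧ (∑ i, d (x i) (xh i)) ≤ (ε : EReal) ∧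
  ∀ y : Fin p → ℝ, (∀ i, 0 ≤ y i) → (∑ i, d (y i) (xh i)) ≤ (ε : EReal) →
    ∑ i, (x i) ^ 2 ≤ ∑ i, (y i) ^ 2

/-- `D` is a divergence: nonnegative, and zero iff the arguments coincide (on its domain). -/
def DivergenceBasic {p : ℕ} (D : Mat p → Mat p → EReal) : Prop :=
  (∀ X Y : Mat p, 0 ≤ D X Y) ∧
  (∀ X Y : Mat p, X.PosSemidef → Y.PosSemidef → D X Y ≠ ⊤ → (D X Y = 0 ↔ X = Y))

/-- Assumption 2 (spectral divergence) for `D` with generator `d`: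
(a) orthogonal equivariance, (b) spectrality with continuous generator, (c) rearrangement. -/
def Assumption2 {p : ℕ} (D : Mat p → Mat p → EReal) (d : ℝ → ℝ → EReal) : Prop :=
  (∀ X Y : Mat p, X.PosSemidef → Y.PosSemidef → ∀ V : Mat p, IsOrthoMat V →
      D X Y = D (V * X * Vᵀ) (V * Y * Vᵀ)) ∧
  (∀ x y : Fin p → ℝ, (∀ i, 0 ≤ x i) → (∀ i, 0 ≤ y i) →
      D (Matrix.diagonal x) (Matrix.diagonal y) = ∑ i, d (x i) (y i)) ∧
  (∀ b : ℝ, 0 < b → ContinuousOn (fun a => d a b) (Set.Ici 0)) ∧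
  (∀ x y : Fin p → ℝ, Monotone x → Monotone y → (∀ i, 0 ≤ x i) → (∀ i, 0 ≤ y i) →
    ∀ V : Mat p, IsOrthoMat V →
      D (Matrix.diagonal x) (Matrix.diagonal y)
        ≤ D (V * Matrix.diagonal x * Vᵀ) (Matrix.diagonal y) ∧
      (D (V * Matrix.diagonal x * Vᵀ) (Matrix.diagonal y) ≠ ⊤ →
        (D (V * Matrix.diagonal x * Vᵀ) (Matrix.diagonal y)
            = D (Matrix.diagonal x) (Matrix.diagonal y)
          ↔ V * Matrix.diagonal x * Vᵀ = Matrix.diagonal x)))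

/-- The generator-level part of Assumption 2: `d` is a spectral divergence on `ℝ₊`. -/
def GenBasic (d : ℝ → ℝ → EReal) : Prop :=
  (∀ a b : ℝ, 0 ≤ a → 0 ≤ b → 0 ≤ d a b) ∧
  (∀ a b : ℝ, 0 ≤ a → 0 ≤ b → d a b ≠ ⊤ → (d a b = 0 ↔ a = b)) ∧
  (∀ b : ℝ, 0 < b → ContinuousOn (fun a => d a b) (Set.Ici 0))

/-- Assumption 3 (regularity of input parameters). -/
def Assumption3 {p : ℕ} (d : ℝ → ℝ → EReal) (xh : Fin p → ℝ) (ε : ℝ) : Prop :=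
  (∀ i, d (xh i) (xh i) ≠ ⊤) ∧ 0 < ε ∧ (ε : EReal) < ∑ i, d 0 (xh i)

/-- Assumption 4 (smoothness and convexity of the generator): for every `b > 0`,
`a ↦ d(a,b)` is finite and twice continuously differentiable on `(0,∞)` with partial
derivatives `d₁, d₂`, and convex on `[0,b]` (as an extended-real-valued function). -/
def Assumption4 (d : ℝ → ℝ → EReal) (d₁ d₂ : ℝ → ℝ → ℝ) : Prop :=
  (∀ a b : ℝ, 0 < a → 0 < b → d a b ≠ ⊤) ∧
  (∀ a b : ℝ, 0 < a → 0 < b → HasDerivAt (fun t => (d t b).toReal) (d₁ a b) a) ∧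
  (∀ a b : ℝ, 0 < a → 0 < b → HasDerivAt (fun t => d₁ t b) (d₂ a b) a) ∧
  (∀ b : ℝ, 0 < b → ContinuousOn (fun a => d₂ a b) (Set.Ioi 0)) ∧
  (∀ b : ℝ, 0 < b → ∀ a₁ ∈ Set.Icc (0:ℝ) b, ∀ a₂ ∈ Set.Icc (0:ℝ) b, ∀ t ∈ Set.Icc (0:ℝ) 1,
      d (t * a₁ + (1 - t) * a₂) b ≤ (t : EReal) * d a₁ b + ((1 - t : ℝ) : EReal) * d a₂ b)

/-- Assumption 5 (differential inequality): `d` is twice continuously differentiable on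
`(0,∞)²` (mixed partial `d₁b` of `d₁` in `b` exists and the second partials are continuous)
and satisfies `a·∂²d/∂a² + b·∂²d/∂a∂b ≥ ∂d/∂a` for `0 < a < b`. -/
def Assumption5 (d₁ d₂ d₁b : ℝ → ℝ → ℝ) : Prop :=
  (∀ a b : ℝ, 0 < a → 0 < b → HasDerivAt (fun t => d₁ a t) (d₁b a b) b) ∧
  ContinuousOn (fun q : ℝ × ℝ => d₂ q.1 q.2) (Set.Ioi 0 ×ˢ Set.Ioi 0) ∧
  ContinuousOn (fun q : ℝ × ℝ => d₁b q.1 q.2) (Set.Ioi 0 ×ˢ Set.Ioi 0) ∧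
  (∀ a b : ℝ, 0 < a → a < b → d₁ a b ≤ a * d₂ a b + b * d₁b a b)

/-- The eigenvalue map `s`: for `γ, b > 0`, `s(γ,b)` is the unique `a ≥ 0` with
`2a + γ·∂d/∂a(a,b) = 0`; and `s(γ,b) = 0` if `γ = 0` or `b = 0`. -/
def EigenMapSpec (d₁ s : ℝ → ℝ → ℝ) : Prop :=
  (∀ γ b : ℝ, γ = 0 ∨ b = 0 → s γ b = 0) ∧
  (∀ γ b : ℝ, 0 < γ → 0 < b →
    0 ≤ s γ b ∧ 2 * s γ b + γ * d₁ (s γ b) b = 0 ∧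
    ∀ a : ℝ, 0 ≤ a → 2 * a + γ * d₁ a b = 0 → a = s γ b)

/-!
For symmetric `X` and `Σ` the loss is `‖X - Σ‖² - ‖Σ‖²`, so the dual objective at `Σ` is
`-‖Σ‖²` and the dual problem is (P_Mat). By the minimax assumption the optimal value of (CSE)
is then `-‖Σ*‖²` for a dual solution `Σ*`. A solution `X*` of (CSE) has loss at most `-‖Σ*‖²`
at `Σ*`, which forces `X* = Σ*`. Conversely, a `δ`-optimal point of (CSE) lies within `√δ` of
`Σ*` (test it against `Σ*`), and letting `δ → 0` in its worst-case bound shows that `Σ*`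
itself attains the optimal value of (CSE).
-/

theorem le_of_forall_exists_dist_sq_lt {E : Type*} [PseudoMetricSpace E] {g : E → ℝ} {s : E}
    {c : ℝ} (hg : ContinuousAt g s) (h : ∀ δ > 0, ∃ x, dist x s ^ 2 < δ ∧ g x < c + δ) :
    g s ≤ c := by
  by_contra! hc
  obtain ⟨r, hr, hball⟩ := Metric.continuousAt_iff.mp hg ((g s - c) / 2) (by linarith)
  obtain ⟨x, hxs, hgx⟩ := h (min ((g s - c) / 2) (r ^ 2)) (by positivity)
  have hdist : dist x s < r :=
    (pow_lt_pow_iff_left₀ dist_nonneg hr.le two_ne_zero).mp (hxs.trans_le (min_le_right _ _))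
  have := (abs_lt.mp (Real.dist_eq _ _ ▸ hball hdist)).1
  linarith [min_le_left ((g s - c) / 2) (r ^ 2)]

theorem Matrix.PosSemidef.transpose_eq_self {n : Type*} [Fintype n] {A : Matrix n n ℝ}
    (hA : A.PosSemidef) : Aᵀ = A :=
  hA.isHermitian.eq

section Frobenius

attribute [local instance] Matrix.frobeniusNormedAddCommGroup

variable {p : ℕ}

theorem frobSq_eq_norm_sq (A : Mat p) : frobSq A = ‖A‖ ^ 2 := by
  rw [Matrix.frobenius_norm_def, ← Real.sqrt_eq_rpow, Real.sq_sqrt (by positivity),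
    Finset.sum_comm]
  simp only [frobSq, Matrix.trace, Matrix.diag, Matrix.mul_apply, Matrix.transpose_apply,
    Real.rpow_two, Real.norm_eq_abs, sq, abs_mul_abs_self]

theorem frobSq_nonneg (A : Mat p) : 0 ≤ frobSq A := by
  rw [frobSq_eq_norm_sq]
  positivity

theorem frobSq_eq_zero_iff {A : Mat p} : frobSq A = 0 ↔ A = 0 := by
  simp [frobSq_eq_norm_sq]

theorem dist_sq_eq_frobSq (X Y : Mat p) : dist X Y ^ 2 = frobSq (X - Y) := by
  rw [dist_eq_norm, frobSq_eq_norm_sq]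

theorem continuous_cseLoss_left (S : Mat p) : Continuous fun X : Mat p => cseLoss X S := by
  unfold cseLoss
  fun_prop

variable {D : Mat p → Mat p → EReal} {Sh : Mat p} {ε : ℝ}

theorem cseLoss_eq_frobSq_sub {X S : Mat p} (hX : Xᵀ = X) (hS : Sᵀ = S) :
    cseLoss X S = frobSq (X - S) - frobSq S := by
  simp only [cseLoss, frobSq, Matrix.transpose_sub, hX, hS, Matrix.sub_mul, Matrix.mul_sub,
    Matrix.trace_sub]
  rw [Matrix.trace_mul_comm X S]
  ring

theorem dualVal_eq_neg_frobSq {S : Mat p} (hS : S.PosSemidef) :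
    dualVal S = ((-frobSq S : ℝ) : EReal) := by
  have hSS : cseLoss S S = -frobSq S := by
    rw [cseLoss_eq_frobSq_sub hS.transpose_eq_self hS.transpose_eq_self, sub_self,
      frobSq_eq_zero_iff.mpr rfl, zero_sub]
  refine le_antisymm (iInf_le_of_le ⟨S, hS⟩ (EReal.coe_le_coe_iff.mpr hSS.le)) ?_
  refine le_iInf fun ⟨X, hX⟩ => EReal.coe_le_coe_iff.mpr ?_
  rw [cseLoss_eq_frobSq_sub hX.transpose_eq_self hS.transpose_eq_self]
  linarith [frobSq_nonneg (X - S)]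

theorem isDualSol_iff_isPMatSol {S : Mat p} : IsDualSol D Sh ε S ↔ IsPMatSol D Sh ε S := by
  refine and_congr_right fun hS => forall₂_congr fun T hT => ?_
  rw [dualVal_eq_neg_frobSq hT.1, dualVal_eq_neg_frobSq hS.1, EReal.coe_le_coe_iff, neg_le_neg_iff]

theorem cseLoss_le_primalVal (X : Mat p) {T : Mat p} (hT : Feas D Sh ε T) :
    (cseLoss X T : EReal) ≤ primalVal D Sh ε X :=
  le_iSup (fun U : {U : Mat p // Feas D Sh ε U} => (cseLoss X U.1 : EReal)) ⟨T, hT⟩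

theorem iInf_primalVal_eq_of_isDualSol (hA1 : MinimaxEq D Sh ε) {S : Mat p}
    (hS : IsDualSol D Sh ε S) :
    ⨅ X : {X : Mat p // X.PosSemidef}, primalVal D Sh ε X.1 = ((-frobSq S : ℝ) : EReal) := by
  rw [hA1, ← dualVal_eq_neg_frobSq hS.1.1]
  exact le_antisymm (iSup_le fun T => hS.2 T.1 T.2)
    (le_iSup (fun T : {T : Mat p // Feas D Sh ε T} => dualVal T.1) ⟨S, hS.1⟩)

theorem eq_of_isCSESol_of_isDualSol (hA1 : MinimaxEq D Sh ε) {X S : Mat p}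
    (hX : IsCSESol D Sh ε X) (hS : IsDualSol D Sh ε S) : X = S := by
  have hXS : (cseLoss X S : EReal) ≤ ((-frobSq S : ℝ) : EReal) := by
    rw [← iInf_primalVal_eq_of_isDualSol hA1 hS]
    exact (cseLoss_le_primalVal X hS.1).trans (le_iInf fun Y => hX.2 Y.1 Y.2)
  rw [EReal.coe_le_coe_iff,
    cseLoss_eq_frobSq_sub hX.1.transpose_eq_self hS.1.1.transpose_eq_self] at hXS
  exact sub_eq_zero.mp (frobSq_eq_zero_iff.mp (le_antisymm (by linarith) (frobSq_nonneg _)))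

theorem cseLoss_le_of_isDualSol (hA1 : MinimaxEq D Sh ε) {S T : Mat p}
    (hS : IsDualSol D Sh ε S) (hT : Feas D Sh ε T) : cseLoss S T ≤ -frobSq S := by
  refine le_of_forall_exists_dist_sq_lt (g := fun X => cseLoss X T)
    (continuous_cseLoss_left T).continuousAt fun δ hδ => ?_
  obtain ⟨⟨X, hX⟩, hXδ⟩ : ∃ X : {X : Mat p // X.PosSemidef},
      primalVal D Sh ε X.1 < ((-frobSq S + δ : ℝ) : EReal) := by
    rw [← iInf_lt_iff, iInf_primalVal_eq_of_isDualSol hA1 hS, EReal.coe_lt_coe_iff]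
    linarith
  have hloss : ∀ U, Feas D Sh ε U → cseLoss X U < -frobSq S + δ := fun U hU =>
    EReal.coe_lt_coe_iff.mp ((cseLoss_le_primalVal X hU).trans_lt hXδ)
  refine ⟨X, ?_, hloss T hT⟩
  have hXS := hloss S hS.1
  rw [cseLoss_eq_frobSq_sub hX.transpose_eq_self hS.1.1.transpose_eq_self] at hXS
  rw [dist_sq_eq_frobSq]
  linarith

theorem isCSESol_of_isDualSol (hA1 : MinimaxEq D Sh ε) {S : Mat p}
    (hS : IsDualSol D Sh ε S) : IsCSESol D Sh ε S := by
  refine ⟨hS.1.1, fun Y hY => ?_⟩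
  calc primalVal D Sh ε S ≤ ((-frobSq S : ℝ) : EReal) :=
        iSup_le fun T => EReal.coe_le_coe_iff.mpr (cseLoss_le_of_isDualSol hA1 hS T.2)
    _ = ⨅ X : {X : Mat p // X.PosSemidef}, primalVal D Sh ε X.1 :=
        (iInf_primalVal_eq_of_isDualSol hA1 hS).symm
    _ ≤ primalVal D Sh ε Y :=
        iInf_le (fun X : {X : Mat p // X.PosSemidef} => primalVal D Sh ε X.1) ⟨Y, hY⟩

end Frobenius

theorem stmt_1_general {p : ℕ} (D : Mat p → Mat p → EReal) (Sh : Mat p) (ε : ℝ)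
    (hA1 : MinimaxEq D Sh ε) :
    (∀ S : Mat p, IsPMatSol D Sh ε S → IsCSESol D Sh ε S ∧ IsDualSol D Sh ε S) ∧
    (∀ X S : Mat p, IsCSESol D Sh ε X → IsDualSol D Sh ε S →
      X = S ∧ IsPMatSol D Sh ε X) := by
  refine ⟨fun S hS => ?_, fun X S hX hS => ?_⟩
  · have hSdual := isDualSol_iff_isPMatSol.mpr hS
    exact ⟨isCSESol_of_isDualSol hA1 hSdual, hSdual⟩
  · obtain rfl := eq_of_isCSESol_of_isDualSol hA1 hX hS
    exact ⟨rfl, isDualSol_iff_isPMatSol.mp hS⟩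

/-- Proposition 1: dual characterization of `X*`.
Under Assumption 1 (minimax), (i) every solution of (P_Mat) solves (CSE) and the dual;
(ii) if `X*` solves (CSE) and `Σ*` solves the dual, then `X* = Σ*` and `X*` solves (P_Mat). -/
theorem stmt_1 {p : ℕ} (D : Mat p → Mat p → EReal) (Sh : Mat p) (ε : ℝ)
    (hSh : Sh.PosSemidef) (hε : 0 < ε)
    (hDbasic : DivergenceBasic D)
    (hA1 : MinimaxEq D Sh ε) :
    (∀ S : Mat p, IsPMatSol D Sh ε S → IsCSESol D Sh ε S ∧ IsDualSol D Sh ε S) ∧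
    (∀ X S : Mat p, IsCSESol D Sh ε X → IsDualSol D Sh ε S →
      X = S ∧ IsPMatSol D Sh ε X) :=
  stmt_1_general D Sh ε hA1
end
end

section
/- Suppose the divergence D satisfies Assumption 2. Then: (i) problem (P_Mat) is feasible if and only if problem (P_Vec) is feasible; (ii) if x* solves (P_Vec), then V̂ Diag(x*) V̂ᵀ solves (P_Mat); (iii) if Σ* solves (P_Mat), then the vector λ(Σ*) of eigenvalues of Σ* arranged in nondecreasing order solves (P_Vec); (iv) problems (P_Mat) and (P_Vec) share the same optimal value. -/
open Matrix Set Filter MeasureTheory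
open scoped BigOperators Classical

noncomputable section

/-! The map `x ↦ V̂ Diag(x) V̂ᵀ` sends feasible points of (P_Vec) to feasible points of (P_Mat)
with the same objective value, by orthogonal invariance and spectrality of `D`. Conversely,
writing a feasible `Σ = W Diag(μ) Wᵀ` with `μ` nondecreasing and rotating by `V̂ᵀ`, the
rearrangement inequality gives `Σ d(μᵢ, x̂ᵢ) ≤ D(Σ, Σ̂) ≤ ε`, while `‖Σ‖_F² = ‖μ‖₂²`. So the two
problems have the same feasible objective values, and all four claims follow. -/

theorem iInf_subtype_eq_of_forall_exists {α β γ : Type*} [CompleteLattice γ]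
    {P : α → Prop} {Q : β → Prop} {f : α → γ} {g : β → γ}
    (hPQ : ∀ a, P a → ∃ b, Q b ∧ g b = f a) (hQP : ∀ b, Q b → ∃ a, P a ∧ f a = g b) :
    ⨅ a : {a // P a}, f a = ⨅ b : {b // Q b}, g b := by
  apply le_antisymm
  · refine le_iInf fun ⟨b, hb⟩ => ?_
    obtain ⟨a, ha, hfg⟩ := hQP b hb
    exact hfg ▸ iInf_le_of_le ⟨a, ha⟩ le_rfl
  · refine le_iInf fun ⟨a, ha⟩ => ?_
    obtain ⟨b, hb, hgf⟩ := hPQ a ha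
    exact hgf ▸ iInf_le_of_le ⟨b, hb⟩ le_rfl

def FeasVec {p : ℕ} (d : ℝ → ℝ → EReal) (xh : Fin p → ℝ) (ε : ℝ) (x : Fin p → ℝ) : Prop :=
  (∀ i, 0 ≤ x i) ∧ (∑ i, d (x i) (xh i)) ≤ (ε : EReal)

section Orthogonal

variable {p : ℕ} {V W : Mat p}

theorem IsOrthoMat.transpose_mul_self (hV : IsOrthoMat V) : Vᵀ * V = 1 :=
  mul_eq_one_comm.mp hV

theorem IsOrthoMat.transpose (hV : IsOrthoMat V) : IsOrthoMat Vᵀ := by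
  rw [IsOrthoMat, transpose_transpose, hV.transpose_mul_self]

theorem IsOrthoMat.mul (hV : IsOrthoMat V) (hW : IsOrthoMat W) : IsOrthoMat (V * W) := by
  rw [IsOrthoMat, transpose_mul, Matrix.mul_assoc, ← Matrix.mul_assoc W, hW, Matrix.one_mul, hV]

theorem IsOrthoMat.submatrix_id_equiv (hV : IsOrthoMat V) (σ : Equiv.Perm (Fin p)) :
    IsOrthoMat (V.submatrix id σ) := by
  rw [IsOrthoMat, transpose_submatrix, submatrix_mul_equiv, hV, submatrix_id_id]

theorem IsOrthoMat.transpose_mul_conj_mul (hV : IsOrthoMat V) (A : Mat p) :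
    Vᵀ * (V * A * Vᵀ) * V = A := by
  simp only [← Matrix.mul_assoc]
  rw [hV.transpose_mul_self, Matrix.one_mul, Matrix.mul_assoc, hV.transpose_mul_self,
    Matrix.mul_one]

theorem conj_diagonal_posSemidef (V : Mat p) {x : Fin p → ℝ} (hx : ∀ i, 0 ≤ x i) :
    (V * diagonal x * Vᵀ).PosSemidef := by
  simpa [conjTranspose_eq_transpose_of_trivial] using
    (posSemidef_diagonal_iff.mpr hx).mul_mul_conjTranspose_same V

theorem nonneg_of_conj_diagonal_posSemidef (hW : IsOrthoMat W) {μ : Fin p → ℝ}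
    (hS : (W * diagonal μ * Wᵀ).PosSemidef) (i : Fin p) : 0 ≤ μ i := by
  have := hS.mul_mul_conjTranspose_same Wᵀ
  rw [conjTranspose_eq_transpose_of_trivial, transpose_transpose,
    hW.transpose_mul_conj_mul] at this
  exact posSemidef_diagonal_iff.mp this i

theorem frobSq_conj_diagonal (hV : IsOrthoMat V) (x : Fin p → ℝ) :
    frobSq (V * diagonal x * Vᵀ) = ∑ i, x i ^ 2 := by
  have hsymm : (V * diagonal x * Vᵀ)ᵀ = V * diagonal x * Vᵀ := by
    rw [transpose_mul, transpose_mul, transpose_transpose, diagonal_transpose, Matrix.mul_assoc]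
  have hsq : (V * diagonal x * Vᵀ) * (V * diagonal x * Vᵀ)
      = V * (diagonal x * diagonal x) * Vᵀ := by
    simp only [← Matrix.mul_assoc]
    rw [Matrix.mul_assoc _ Vᵀ V, hV.transpose_mul_self, Matrix.mul_one]
  rw [frobSq, hsymm, hsq, trace_mul_comm, ← Matrix.mul_assoc, hV.transpose_mul_self,
    Matrix.one_mul, diagonal_mul_diagonal, trace_diagonal]
  simp only [sq]

theorem exists_monotone_orthogonal_diagonalization {S : Mat p} (hS : S.IsHermitian) :
    ∃ (μ : Fin p → ℝ) (W : Mat p), Monotone μ ∧ IsOrthoMat W ∧ S = W * diagonal μ * Wᵀ := by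
  set U : Mat p := (hS.eigenvectorUnitary : Mat p)
  have hU : IsOrthoMat U := by
    rw [IsOrthoMat, ← conjTranspose_eq_transpose_of_trivial]
    exact mem_unitaryGroup_iff.mp hS.eigenvectorUnitary.2
  have hSU : S = U * diagonal hS.eigenvalues * Uᵀ := by
    rw [← conjTranspose_eq_transpose_of_trivial]
    simpa [Function.comp_def, star_eq_conjTranspose] using hS.spectral_theorem
  set σ := Tuple.sort hS.eigenvalues
  refine ⟨hS.eigenvalues ∘ σ, U.submatrix id σ, Tuple.monotone_sort _,
    hU.submatrix_id_equiv σ, ?_⟩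
  rwa [transpose_submatrix, ← submatrix_diagonal_equiv _ σ, submatrix_mul_equiv,
    submatrix_mul_equiv, submatrix_id_id]

end Orthogonal

section Spectral

variable {p : ℕ} {D : Mat p → Mat p → EReal} {d : ℝ → ℝ → EReal} {xh : Fin p → ℝ}
  {Vh : Mat p} {ε : ℝ}

theorem divergence_conj_diagonal (hA2 : Assumption2 D d) (hV : IsOrthoMat Vh)
    (hnn : ∀ i, 0 ≤ xh i) {x : Fin p → ℝ} (hx : ∀ i, 0 ≤ x i) :
    D (Vh * diagonal x * Vhᵀ) (Vh * diagonal xh * Vhᵀ) = ∑ i, d (x i) (xh i) := by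
  rw [← hA2.1 _ _ (posSemidef_diagonal_iff.mpr hx) (posSemidef_diagonal_iff.mpr hnn) Vh hV,
    hA2.2.1 x xh hx hnn]

theorem sum_generator_le_divergence (hA2 : Assumption2 D d) (hV : IsOrthoMat Vh)
    (hmono : Monotone xh) (hnn : ∀ i, 0 ≤ xh i) {μ : Fin p → ℝ} {W : Mat p}
    (hμ : Monotone μ) (hW : IsOrthoMat W) (hS : (W * diagonal μ * Wᵀ).PosSemidef) :
    ∑ i, d (μ i) (xh i) ≤ D (W * diagonal μ * Wᵀ) (Vh * diagonal xh * Vhᵀ) := by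
  have hμnn := nonneg_of_conj_diagonal_posSemidef hW hS
  have hrot : Vhᵀ * (W * diagonal μ * Wᵀ) * Vh = (Vhᵀ * W) * diagonal μ * (Vhᵀ * W)ᵀ := by
    simp only [transpose_mul, transpose_transpose, Matrix.mul_assoc]
  calc ∑ i, d (μ i) (xh i) = D (diagonal μ) (diagonal xh) := (hA2.2.1 μ xh hμnn hnn).symm
    _ ≤ D ((Vhᵀ * W) * diagonal μ * (Vhᵀ * W)ᵀ) (diagonal xh) :=
      (hA2.2.2.2 μ xh hμ hmono hμnn hnn _ (hV.transpose.mul hW)).1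
    _ = D (W * diagonal μ * Wᵀ) (Vh * diagonal xh * Vhᵀ) := by
      rw [hA2.1 _ _ hS (conj_diagonal_posSemidef Vh hnn) Vhᵀ hV.transpose, transpose_transpose,
        hrot, hV.transpose_mul_conj_mul]

theorem feas_conj_diagonal (hA2 : Assumption2 D d) (hV : IsOrthoMat Vh)
    (hnn : ∀ i, 0 ≤ xh i) {x : Fin p → ℝ} (hx : FeasVec d xh ε x) :
    Feas D (Vh * diagonal xh * Vhᵀ) ε (Vh * diagonal x * Vhᵀ) :=
  ⟨conj_diagonal_posSemidef Vh hx.1, (divergence_conj_diagonal hA2 hV hnn hx.1).trans_le hx.2⟩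

theorem feasVec_of_feas_conj_diagonal (hA2 : Assumption2 D d) (hV : IsOrthoMat Vh)
    (hmono : Monotone xh) (hnn : ∀ i, 0 ≤ xh i) {μ : Fin p → ℝ} {W : Mat p}
    (hμ : Monotone μ) (hW : IsOrthoMat W)
    (hS : Feas D (Vh * diagonal xh * Vhᵀ) ε (W * diagonal μ * Wᵀ)) : FeasVec d xh ε μ :=
  ⟨nonneg_of_conj_diagonal_posSemidef hW hS.1,
    (sum_generator_le_divergence hA2 hV hmono hnn hμ hW hS.1).trans hS.2⟩

end Spectral

theorem stmt_2_general {p : ℕ}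
    (D : Mat p → Mat p → EReal) (d : ℝ → ℝ → EReal)
    (Sh : Mat p) (xh : Fin p → ℝ) (Vh : Mat p) (ε : ℝ)
    (hmono : Monotone xh) (hnn : ∀ i, 0 ≤ xh i)
    (hV : IsOrthoMat Vh) (hdec : Sh = Vh * Matrix.diagonal xh * Vhᵀ)
    (hA2 : Assumption2 D d) :
    ((∃ S : Mat p, Feas D Sh ε S) ↔
      (∃ x : Fin p → ℝ, (∀ i, 0 ≤ x i) ∧ (∑ i, d (x i) (xh i)) ≤ (ε : EReal))) ∧
    (∀ x : Fin p → ℝ, IsPVecSol d xh ε x →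
      IsPMatSol D Sh ε (Vh * Matrix.diagonal x * Vhᵀ)) ∧
    (∀ S : Mat p, IsPMatSol D Sh ε S →
      ∀ (μ : Fin p → ℝ) (W : Mat p), Monotone μ → IsOrthoMat W →
        S = W * Matrix.diagonal μ * Wᵀ → IsPVecSol d xh ε μ) ∧
    ((⨅ S : {S : Mat p // Feas D Sh ε S}, (frobSq S.1 : EReal)) =
      ⨅ x : {x : Fin p → ℝ // (∀ i, 0 ≤ x i) ∧ (∑ i, d (x i) (xh i)) ≤ (ε : EReal)},
        ((∑ i, (x.1 i) ^ 2 : ℝ) : EReal)) := by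
  subst hdec
  have hlift (x : Fin p → ℝ) (hx : FeasVec d xh ε x) := feas_conj_diagonal hA2 hV hnn hx
  have hdown {S : Mat p} (hS : Feas D (Vh * diagonal xh * Vhᵀ) ε S) :
      ∃ μ, FeasVec d xh ε μ ∧ ∑ i, μ i ^ 2 = frobSq S := by
    obtain ⟨μ, W, hμ, hW, rfl⟩ := exists_monotone_orthogonal_diagonalization hS.1.1
    exact ⟨μ, feasVec_of_feas_conj_diagonal hA2 hV hmono hnn hμ hW hS,
      (frobSq_conj_diagonal hW μ).symm⟩
  refine ⟨⟨fun ⟨_, hS⟩ => (hdown hS).imp fun _ h => h.1, fun ⟨x, hx⟩ => ⟨_, hlift x hx⟩⟩,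
    ?_, ?_, ?_⟩
  · rintro x ⟨hx, hxε, hopt⟩
    refine ⟨hlift x ⟨hx, hxε⟩, fun T hT => ?_⟩
    obtain ⟨μ, ⟨hμ, hμε⟩, hfrob⟩ := hdown hT
    rw [frobSq_conj_diagonal hV, ← hfrob]
    exact hopt μ hμ hμε
  · rintro S ⟨hS, hopt⟩ μ W hμ hW rfl
    obtain ⟨hμnn, hμε⟩ := feasVec_of_feas_conj_diagonal hA2 hV hmono hnn hμ hW hS
    refine ⟨hμnn, hμε, fun y hy hyε => ?_⟩
    rw [← frobSq_conj_diagonal hW, ← frobSq_conj_diagonal hV]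
    exact hopt _ (hlift y ⟨hy, hyε⟩)
  · apply iInf_subtype_eq_of_forall_exists (f := fun S ↦ (frobSq S : EReal))
      (g := fun x : Fin p → ℝ ↦ ((∑ i, x i ^ 2 : ℝ) : EReal))
    · intro S hS
      obtain ⟨μ, hμ, hfrob⟩ := hdown hS
      exact ⟨μ, hμ, congrArg _ hfrob⟩
    · exact fun x hx => ⟨_, hlift x hx, by rw [frobSq_conj_diagonal hV]⟩

/-- Proposition 2: equivalence of (P_Mat) and (P_Vec).
Under Assumption 2: (i) (P_Mat) is feasible iff (P_Vec) is feasible; (ii) if `x*` solves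
(P_Vec) then `V̂ Diag(x*) V̂ᵀ` solves (P_Mat); (iii) if `Σ*` solves (P_Mat) then its vector
of eigenvalues in nondecreasing order solves (P_Vec); (iv) the optimal values coincide. -/
theorem stmt_2 {p : ℕ}
    (D : Mat p → Mat p → EReal) (d : ℝ → ℝ → EReal)
    (Sh : Mat p) (xh : Fin p → ℝ) (Vh : Mat p) (ε : ℝ)
    (hSh : Sh.PosSemidef) (hmono : Monotone xh) (hnn : ∀ i, 0 ≤ xh i)
    (hV : IsOrthoMat Vh) (hdec : Sh = Vh * Matrix.diagonal xh * Vhᵀ)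
    (hε : 0 < ε)
    (hDbasic : DivergenceBasic D)
    (hA2 : Assumption2 D d) :
    ((∃ S : Mat p, Feas D Sh ε S) ↔
      (∃ x : Fin p → ℝ, (∀ i, 0 ≤ x i) ∧ (∑ i, d (x i) (xh i)) ≤ (ε : EReal))) ∧
    (∀ x : Fin p → ℝ, IsPVecSol d xh ε x →
      IsPMatSol D Sh ε (Vh * Matrix.diagonal x * Vhᵀ)) ∧
    (∀ S : Mat p, IsPMatSol D Sh ε S →
      ∀ (μ : Fin p → ℝ) (W : Mat p), Monotone μ → IsOrthoMat W →
        S = W * Matrix.diagonal μ * Wᵀ → IsPVecSol d xh ε μ) ∧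
    ((⨅ S : {S : Mat p // Feas D Sh ε S}, (frobSq S.1 : EReal)) =
      ⨅ x : {x : Fin p → ℝ // (∀ i, 0 ≤ x i) ∧ (∑ i, d (x i) (xh i)) ≤ (ε : EReal)},
        ((∑ i, (x.1 i) ^ 2 : ℝ) : EReal)) :=
  stmt_2_general D d Sh xh Vh ε hmono hnn hV hdec hA2
end
end

section
/- Suppose the divergence D satisfies Assumptions 2, 3 and 4. Then problem (P_Vec) admits a unique optimal solution x*, whose components are x*_i = s(γ*, x̂_i) for i = 1,…,p, where γ* is the unique positive root of the equation Σ_{i=1}^p d(s(γ, x̂_i), x̂_i) − ε = 0. Moreover 0 < x*_i < x̂_i whenever x̂_i > 0, and x*_i = 0 whenever x̂_i = 0. -/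
/-!
Testing `D` on diagonal matrices shows that, for every `b ≥ 0` with `d(b,b) < ∞`, `a ↦ d(a,b)` is
nonnegative on `ℝ₊` and vanishes only at `b`. For `b > 0` it is convex on `[0,b]`, so its
derivative is nondecreasing, negative on `(0,b)` and zero at `b`. Hence `γ ↦ s(γ,b)` is an
increasing bijection of `(0,∞)` onto `(0,b)`: it is continuous, tends to `0` as `γ → 0⁺` and to
`b` as `γ → ∞`. The total divergence `γ ↦ Σᵢ d(s(γ,x̂ᵢ),x̂ᵢ)` thus moves continuously from
`Σᵢ d(0,x̂ᵢ) > ε` to `0 < ε`, and the intermediate value theorem produces `γ*`.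

`s(γ,b)` is the stationary point of the Lagrangian `a² + γ d(a,b)`; by convexity
`a² + γ d(a,b) ≥ s² + γ d(s,b) + (a - s)²` (for `a > b` compare with `a = b`). Summing over the
coordinates of a feasible `y` and using `Σᵢ d(yᵢ,x̂ᵢ) ≤ ε = Σᵢ d(x*ᵢ,x̂ᵢ)` gives
`‖y‖² ≥ ‖x*‖² + ‖y - x*‖²`: optimality and uniqueness of `x*` at once. Uniqueness of `γ*` follows
because `s(·,x̂ᵢ)` is injective for some `x̂ᵢ > 0`.
-/

open Matrix Set Filter MeasureTheory
open scoped BigOperators Classical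

noncomputable section

open Topology

theorem EReal.coe_finset_sum {ι : Type*} (s : Finset ι) (g : ι → ℝ) :
    ((∑ i ∈ s, g i : ℝ) : EReal) = ∑ i ∈ s, (g i : EReal) :=
  map_sum (⟨⟨(↑), EReal.coe_zero⟩, EReal.coe_add⟩ : ℝ →+ EReal) g s

theorem EReal.sum_ne_bot {ι : Type*} {s : Finset ι} {f : ι → EReal} (h : ∀ i ∈ s, f i ≠ ⊥) :
    ∑ i ∈ s, f i ≠ ⊥ := by
  induction s using Finset.cons_induction with
  | empty => simp
  | cons a s ha ih =>
    rw [Finset.sum_cons, EReal.add_ne_bot_iff]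
    exact ⟨h a (by simp), ih fun i hi => h i (by simp [hi])⟩

theorem EReal.tendsto_finset_sum {ι α : Type*} {l : Filter α} (s : Finset ι)
    {f : ι → α → EReal} {L : ι → EReal} (hf : ∀ i ∈ s, Tendsto (f i) l (𝓝 (L i)))
    (hL : ∀ i ∈ s, L i ≠ ⊥) :
    Tendsto (fun x => ∑ i ∈ s, f i x) l (𝓝 (∑ i ∈ s, L i)) := by
  induction s using Finset.cons_induction with
  | empty => simpa using tendsto_const_nhds
  | cons a s ha ih =>
    simp only [Finset.sum_cons]
    have hrest : ∑ i ∈ s, L i ≠ ⊥ := EReal.sum_ne_bot fun i hi => hL i (by simp [hi])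
    exact (EReal.continuousAt_add (Or.inr hrest) (Or.inl (hL a (by simp)))).tendsto.comp
      ((hf a (by simp)).prodMk_nhds (ih (fun i hi => hf i (by simp [hi]))
        (fun i hi => hL i (by simp [hi]))))

theorem EReal.ne_top_of_sum_le_coe {ι : Type*} {s : Finset ι} {f : ι → EReal} {r : ℝ}
    (hf : ∀ i ∈ s, 0 ≤ f i) (h : ∑ i ∈ s, f i ≤ r) {i : ι} (hi : i ∈ s) : f i ≠ ⊤ :=
  ne_top_of_le_ne_top (EReal.coe_ne_top r) ((Finset.single_le_sum hf hi).trans h)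

theorem EReal.sum_eq_coe_sum_toReal_of_sum_le {ι : Type*} {s : Finset ι} {f : ι → EReal} {r : ℝ}
    (hf : ∀ i ∈ s, 0 ≤ f i) (h : ∑ i ∈ s, f i ≤ r) :
    ∑ i ∈ s, f i = ((∑ i ∈ s, (f i).toReal : ℝ) : EReal) := by
  rw [EReal.coe_finset_sum]
  exact Finset.sum_congr rfl fun i hi => (EReal.coe_toReal (EReal.ne_top_of_sum_le_coe hf h hi)
    (EReal.bot_lt_zero.trans_le (hf i hi)).ne').symm

theorem ConvexOn.add_mul_sub_le_of_hasDerivAt {S : Set ℝ} {f : ℝ → ℝ} {x y f' : ℝ}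
    (hf : ConvexOn ℝ S f) (hx : x ∈ S) (hy : y ∈ S) (hd : HasDerivAt f f' x) :
    f x + f' * (y - x) ≤ f y := by
  rcases lt_trichotomy y x with h | rfl | h
  · have := hf.slope_le_of_hasDerivAt hy hx h hd
    rw [slope_def_field, div_le_iff₀ (by linarith)] at this
    nlinarith
  · simp
  · have := hf.le_slope_of_hasDerivAt hx hy h hd
    rw [slope_def_field, le_div_iff₀ (by linarith)] at this
    nlinarith

theorem convexOn_toReal_inter_ne_top {S : Set ℝ} {φ : ℝ → EReal} (hS : Convex ℝ S)
    (hbot : ∀ x ∈ S, φ x ≠ ⊥)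
    (hφ : ∀ x ∈ S, ∀ y ∈ S, ∀ t ∈ Icc (0 : ℝ) 1,
      φ (t * x + (1 - t) * y) ≤ (t : EReal) * φ x + ((1 - t : ℝ) : EReal) * φ y) :
    ConvexOn ℝ (S ∩ {x | φ x ≠ ⊤}) (fun x => (φ x).toReal) := by
  have key : ∀ x ∈ S ∩ {x | φ x ≠ ⊤}, ∀ y ∈ S ∩ {x | φ x ≠ ⊤}, ∀ t ∈ Icc (0 : ℝ) 1,
      φ (t * x + (1 - t) * y) ≤ ((t * (φ x).toReal + (1 - t) * (φ y).toReal : ℝ) : EReal) := by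
    intro x hx y hy t ht
    rw [EReal.coe_add, EReal.coe_mul, EReal.coe_mul, EReal.coe_toReal hx.2 (hbot x hx.1),
      EReal.coe_toReal hy.2 (hbot y hy.1)]
    exact hφ x hx.1 y hy.1 t ht
  have hmem : ∀ x ∈ S ∩ {x | φ x ≠ ⊤}, ∀ y ∈ S ∩ {x | φ x ≠ ⊤}, ∀ a b : ℝ, 0 ≤ a → 0 ≤ b →
      a + b = 1 → a • x + b • y = a * x + (1 - a) * y ∧ a • x + b • y ∈ S ∩ {x | φ x ≠ ⊤} := by
    intro x hx y hy a b ha hb hab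
    have hz : a • x + b • y = a * x + (1 - a) * y := by simp [← hab]
    refine ⟨hz, hS hx.1 hy.1 ha hb hab, show φ _ ≠ ⊤ from hz ▸ ?_⟩
    exact ne_top_of_le_ne_top (EReal.coe_ne_top _) (key x hx y hy a ⟨ha, by linarith⟩)
  refine ⟨fun x hx y hy a b ha hb hab => (hmem x hx y hy a b ha hb hab).2, ?_⟩
  intro x hx y hy a b ha hb hab
  obtain ⟨hz, hzS⟩ := hmem x hx y hy a b ha hb hab
  have := EReal.toReal_le_toReal (key x hx y hy a ⟨ha, by linarith⟩) (hbot _ (hz ▸ hzS.1))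
    (EReal.coe_ne_top _)
  rw [EReal.toReal_coe, ← hz, ← hab, add_sub_cancel_left] at this
  simpa only [smul_eq_mul] using this

section MonotoneOnto
variable {t : ℝ → ℝ} {x₀ c e : ℝ}

theorem MonotoneOn.continuousOn_of_image_Ioi_eq_Ioo (ht : MonotoneOn t (Ioi x₀))
    (himg : t '' Ioi x₀ = Ioo c e) : ContinuousOn t (Ioi x₀) := by
  intro γ hγ
  have htγ : t γ ∈ Ioo c e := himg ▸ mem_image_of_mem t hγ
  exact (continuousAt_of_monotoneOn_of_image_mem_nhds ht (Ioi_mem_nhds hγ)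
    (himg ▸ Ioo_mem_nhds htγ.1 htγ.2)).continuousWithinAt

theorem MonotoneOn.tendsto_atTop_of_image_Ioi_eq_Ioo (ht : MonotoneOn t (Ioi x₀))
    (himg : t '' Ioi x₀ = Ioo c e) : Tendsto t atTop (𝓝 e) := by
  have hmem : ∀ γ, x₀ < γ → t γ ∈ Ioo c e := fun γ hγ => himg ▸ mem_image_of_mem t hγ
  have hce : c < e := (hmem (x₀ + 1) (by linarith)).1.trans (hmem (x₀ + 1) (by linarith)).2
  refine tendsto_order.2 ⟨fun a ha => ?_, fun a ha => ?_⟩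
  · obtain ⟨c', hc', hc'e⟩ := exists_between (max_lt ha hce)
    obtain ⟨γ', hγ', rfl⟩ : c' ∈ t '' Ioi x₀ :=
      himg ▸ ⟨(le_max_right _ _).trans_lt hc', hc'e⟩
    filter_upwards [eventually_gt_atTop γ'] with γ hγ
    exact ((le_max_left _ _).trans_lt hc').trans_le (ht hγ' (mem_Ioi.2 (hγ'.trans hγ)) hγ.le)
  · filter_upwards [eventually_gt_atTop x₀] with γ hγ
    exact (hmem γ hγ).2.trans ha

theorem MonotoneOn.tendsto_nhdsGT_of_image_Ioi_eq_Ioo (ht : MonotoneOn t (Ioi x₀))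
    (himg : t '' Ioi x₀ = Ioo c e) : Tendsto t (𝓝[>] x₀) (𝓝 c) := by
  have hmem : ∀ γ, x₀ < γ → t γ ∈ Ioo c e := fun γ hγ => himg ▸ mem_image_of_mem t hγ
  have hce : c < e := (hmem (x₀ + 1) (by linarith)).1.trans (hmem (x₀ + 1) (by linarith)).2
  refine tendsto_order.2 ⟨fun a ha => ?_, fun a ha => ?_⟩
  · filter_upwards [self_mem_nhdsWithin] with γ hγ
    exact ha.trans (hmem γ hγ).1
  · obtain ⟨c', hcc', hc'⟩ := exists_between (lt_min ha hce)
    obtain ⟨γ', hγ', rfl⟩ : c' ∈ t '' Ioi x₀ :=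
      himg ▸ ⟨hcc', hc'.trans_le (min_le_right _ _)⟩
    filter_upwards [Ioo_mem_nhdsGT hγ'] with γ hγ
    exact (ht hγ.1 hγ' hγ.2.le).trans_lt (hc'.trans_le (min_le_left _ _))

end MonotoneOnto

section StationaryPoint
variable {b : ℝ} {g t : ℝ → ℝ}

theorem exists_mem_Ioo_two_mul_add_mul_eq_zero (hb : 0 < b) {γ : ℝ} (hγ : 0 < γ)
    (hcont : ContinuousOn g (Ioc 0 b)) (hmono : MonotoneOn g (Ioc 0 b))
    (hneg : ∀ a ∈ Ioo 0 b, g a < 0) (hgb : g b = 0) :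
    ∃ a ∈ Ioo 0 b, 2 * a + γ * g a = 0 := by
  have hmid : b / 2 ∈ Ioo 0 b := ⟨by linarith, by linarith⟩
  have hgmid := hneg _ hmid
  set a₀ := min (b / 2) (γ * -g (b / 2) / 4)
  have ha₀ : a₀ ∈ Ioc 0 b :=
    ⟨lt_min hmid.1 (by nlinarith), (min_le_left _ _).trans hmid.2.le⟩
  have hleft : 2 * a₀ + γ * g a₀ < 0 := by
    have h1 : g a₀ ≤ g (b / 2) := hmono ha₀ ⟨hmid.1, hmid.2.le⟩ (min_le_left _ _)
    have h2 : a₀ ≤ γ * -g (b / 2) / 4 := min_le_right _ _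
    nlinarith
  have hcont' : ContinuousOn (fun a => 2 * a + γ * g a) (Icc a₀ b) :=
    (continuousOn_const.mul continuousOn_id).add
      (continuousOn_const.mul (hcont.mono fun x hx => ⟨ha₀.1.trans_le hx.1, hx.2⟩))
  obtain ⟨a, ha, hroot⟩ :=
    intermediate_value_Icc ha₀.2 hcont' ⟨hleft.le, by simp only [hgb]; linarith⟩
  refine ⟨a, ⟨ha₀.1.trans_le ha.1, ha.2.lt_of_ne ?_⟩, hroot⟩
  rintro rfl
  simp only [hgb] at hroot
  linarith

theorem strictMonoOn_Ioi_of_two_mul_add_mul_eq_zero (hmono : MonotoneOn g (Ioc 0 b))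
    (ht : ∀ γ, 0 < γ → t γ ∈ Ioo 0 b ∧ 2 * t γ + γ * g (t γ) = 0) :
    StrictMonoOn t (Ioi 0) := by
  intro γ hγ γ' hγ' hlt
  obtain ⟨hm, he⟩ := ht γ hγ
  obtain ⟨hm', he'⟩ := ht γ' hγ'
  by_contra! hle
  have hg : g (t γ') ≤ g (t γ) := hmono ⟨hm'.1, hm'.2.le⟩ ⟨hm.1, hm.2.le⟩ hle
  have hgneg : g (t γ) < 0 := by nlinarith [hm.1, mem_Ioi.1 hγ]
  nlinarith [mem_Ioi.1 hγ]

theorem image_Ioi_eq_Ioo_of_two_mul_add_mul_eq_zero (hneg : ∀ a ∈ Ioo 0 b, g a < 0)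
    (ht : ∀ γ, 0 < γ → t γ ∈ Ioo 0 b)
    (huniq : ∀ γ, 0 < γ → ∀ a, 0 ≤ a → 2 * a + γ * g a = 0 → a = t γ) :
    t '' Ioi 0 = Ioo 0 b := by
  refine MapsTo.image_subset (fun γ hγ => ht γ hγ) |>.antisymm fun a ha => ?_
  have hga := hneg a ha
  have hγ : 0 < -2 * a / g a := div_pos_of_neg_of_neg (by linarith [ha.1]) hga
  refine ⟨_, hγ, (huniq _ hγ a ha.1.le ?_).symm⟩
  field_simp [hga.ne]
  ring

end StationaryPoint

def IsDivergenceFrom (d : ℝ → ℝ → EReal) (b : ℝ) : Prop :=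
  ∀ a, 0 ≤ a → 0 ≤ d a b ∧ (d a b = 0 ↔ a = b)

section Spectral
variable {p : ℕ} {D : Mat p → Mat p → EReal} {d : ℝ → ℝ → EReal}

theorem generator_self_eq_zero (hD : DivergenceBasic D) (hA2 : Assumption2 D d) (i₀ : Fin p)
    {c : ℝ} (hc : 0 ≤ c) (hcc : d c c ≠ ⊤) : d c c = 0 := by
  have hC : (diagonal fun _ : Fin p => c).PosSemidef := PosSemidef.diagonal fun _ => hc
  have hsum : D (diagonal fun _ => c) (diagonal fun _ => c) = p • d c c := by
    rw [hA2.2.1 _ _ (fun _ => hc) (fun _ => hc), Finset.sum_const, Finset.card_univ,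
      Fintype.card_fin]
  have hzero := fun hne => (hD.2 _ _ hC hC hne).2 rfl
  rw [hsum] at hzero
  have hp : (0 : EReal) < p := by exact_mod_cast i₀.pos
  generalize d c c = x at hcc hzero ⊢
  induction x using EReal.rec with
  | bot => simp [EReal.mul_bot_of_pos hp] at hzero
  | coe r =>
    rw [← EReal.coe_nsmul] at hzero
    simpa [i₀.pos.ne'] using hzero (EReal.coe_ne_top _)
  | top => simp at hcc

theorem divergence_diagonal_update (hA2 : Assumption2 D d) (i₀ : Fin p) {a c : ℝ}
    (ha : 0 ≤ a) (hc : 0 ≤ c) (hcc : d c c = 0) :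
    D (diagonal (Function.update (fun _ => c) i₀ a)) (diagonal fun _ => c) = d a c := by
  rw [hA2.2.1 _ _ (fun i => ?_) (fun _ => hc),
    Finset.sum_eq_single i₀ (fun j _ hj => by simp [hj, hcc]) (by simp)]
  · simp
  · rcases eq_or_ne i i₀ with rfl | h <;> simp [*]

theorem isDivergenceFrom_of_spectral (hD : DivergenceBasic D) (hA2 : Assumption2 D d)
    (i₀ : Fin p) {b : ℝ} (hb : 0 ≤ b) (hbb : d b b ≠ ⊤) : IsDivergenceFrom d b := by
  have hbb0 := generator_self_eq_zero hD hA2 i₀ hb hbb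
  intro a ha
  have hDa := divergence_diagonal_update hA2 i₀ ha hb hbb0
  refine ⟨hDa ▸ hD.1 _ _, fun h => ?_, fun h => h ▸ hbb0⟩
  have hPSD : ∀ {x : ℝ}, 0 ≤ x →
      (diagonal (Function.update (fun _ : Fin p => b) i₀ x)).PosSemidef := fun hx =>
    PosSemidef.diagonal fun i => by rcases eq_or_ne i i₀ with rfl | h <;> simp [*]
  have hmat := (hD.2 _ _ (hPSD ha) (PosSemidef.diagonal fun _ => hb) (by simp [hDa, h])).1
    (hDa.trans h)
  simpa using congrFun (congrFun hmat i₀) i₀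

end Spectral

theorem EigenMapSpec.zero_right {d₁ s : ℝ → ℝ → ℝ} (hs : EigenMapSpec d₁ s) {γ : ℝ} :
    s γ 0 = 0 :=
  hs.1 γ 0 (Or.inr rfl)

theorem EigenMapSpec.nonneg {d₁ s : ℝ → ℝ → ℝ} (hs : EigenMapSpec d₁ s) {γ b : ℝ}
    (hγ : 0 < γ) (hb : 0 ≤ b) : 0 ≤ s γ b := by
  rcases hb.eq_or_lt with rfl | hb
  · exact hs.zero_right.ge
  · exact (hs.2 γ b hγ hb).1

theorem IsDivergenceFrom.ne_bot {d : ℝ → ℝ → EReal} {a b : ℝ} (hdb : IsDivergenceFrom d b)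
    (ha : 0 ≤ a) : d a b ≠ ⊥ :=
  (EReal.bot_lt_zero.trans_le (hdb a ha).1).ne'

section Generator
variable {d : ℝ → ℝ → EReal} {d₁ d₂ s : ℝ → ℝ → ℝ} {b : ℝ}

theorem convexOn_generator (hA4 : Assumption4 d d₁ d₂) (hdb : IsDivergenceFrom d b)
    (hb : 0 < b) : ConvexOn ℝ (Icc 0 b ∩ {a | d a b ≠ ⊤}) (fun a => (d a b).toReal) :=
  convexOn_toReal_inter_ne_top (convex_Icc 0 b) (fun _ ha => hdb.ne_bot ha.1) (hA4.2.2.2.2 b hb)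

theorem convexOn_Ioc_generator (hA4 : Assumption4 d d₁ d₂) (hdb : IsDivergenceFrom d b)
    (hb : 0 < b) : ConvexOn ℝ (Ioc 0 b) (fun a => (d a b).toReal) :=
  (convexOn_generator hA4 hdb hb).subset
    (fun a ha => ⟨Ioc_subset_Icc_self ha, hA4.1 a b ha.1 hb⟩) (convex_Ioc 0 b)

theorem monotoneOn_d₁ (hA4 : Assumption4 d d₁ d₂) (hdb : IsDivergenceFrom d b) (hb : 0 < b) :
    MonotoneOn (fun a => d₁ a b) (Ioc 0 b) :=
  ((convexOn_Ioc_generator hA4 hdb hb).monotoneOn_deriv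
    fun a ha => (hA4.2.1 a b ha.1 hb).differentiableAt).congr
    fun a ha => (hA4.2.1 a b ha.1 hb).deriv

theorem d₁_neg (hA4 : Assumption4 d d₁ d₂) (hdb : IsDivergenceFrom d b) (hb : 0 < b)
    {a : ℝ} (ha : a ∈ Ioo 0 b) : d₁ a b < 0 := by
  have hslope := (convexOn_Ioc_generator hA4 hdb hb).le_slope_of_hasDerivAt
    (Ioo_subset_Ioc_self ha) ⟨hb, le_rfl⟩ ha.2 (hA4.2.1 a b ha.1 hb)
  have hfa : 0 < (d a b).toReal := EReal.toReal_pos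
    (lt_of_le_of_ne (hdb a ha.1.le).1 fun h => ha.2.ne ((hdb a ha.1.le).2.1 h.symm))
    (hA4.1 a b ha.1 hb)
  rw [slope_def_field, ((hdb b hb.le).2.2 rfl), EReal.toReal_zero] at hslope
  exact hslope.trans_lt (div_neg_of_neg_of_pos (by linarith) (by linarith [ha.2]))

theorem d₁_self (hA4 : Assumption4 d d₁ d₂) (hdb : IsDivergenceFrom d b) (hb : 0 < b) :
    d₁ b b = 0 := by
  have hmin : IsLocalMin (fun a => (d a b).toReal) b := by
    filter_upwards [Ioi_mem_nhds hb] with a ha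
    simpa [(hdb b hb.le).2.2 rfl] using EReal.toReal_nonneg (hdb a (le_of_lt ha)).1
  exact hmin.hasDerivAt_eq_zero (hA4.2.1 b b hb hb)

theorem eigenMap_mem_Ioo (hA4 : Assumption4 d d₁ d₂) (hs : EigenMapSpec d₁ s)
    (hdb : IsDivergenceFrom d b) (hb : 0 < b) {γ : ℝ} (hγ : 0 < γ) : s γ b ∈ Ioo 0 b := by
  obtain ⟨a, ha, hroot⟩ := exists_mem_Ioo_two_mul_add_mul_eq_zero hb hγ
    (fun a ha => (hA4.2.2.1 a b ha.1 hb).continuousAt.continuousWithinAt)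
    (monotoneOn_d₁ hA4 hdb hb) (fun a ha => d₁_neg hA4 hdb hb ha) (d₁_self hA4 hdb hb)
  exact (hs.2 γ b hγ hb).2.2 a ha.1.le hroot ▸ ha

theorem eigenMap_strictMonoOn (hA4 : Assumption4 d d₁ d₂) (hs : EigenMapSpec d₁ s)
    (hdb : IsDivergenceFrom d b) (hb : 0 < b) : StrictMonoOn (fun γ => s γ b) (Ioi 0) :=
  strictMonoOn_Ioi_of_two_mul_add_mul_eq_zero (monotoneOn_d₁ hA4 hdb hb)
    fun γ hγ => ⟨eigenMap_mem_Ioo hA4 hs hdb hb hγ, (hs.2 γ b hγ hb).2.1⟩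

theorem image_eigenMap (hA4 : Assumption4 d d₁ d₂) (hs : EigenMapSpec d₁ s)
    (hdb : IsDivergenceFrom d b) (hb : 0 < b) : (fun γ => s γ b) '' Ioi 0 = Ioo 0 b :=
  image_Ioi_eq_Ioo_of_two_mul_add_mul_eq_zero (fun _ ha => d₁_neg hA4 hdb hb ha)
    (fun _ hγ => eigenMap_mem_Ioo hA4 hs hdb hb hγ) fun γ hγ => (hs.2 γ b hγ hb).2.2

theorem eigenMap_sq_add_le (hA4 : Assumption4 d d₁ d₂) (hs : EigenMapSpec d₁ s)
    (hdb : IsDivergenceFrom d b) (hb : 0 ≤ b) {γ a : ℝ} (hγ : 0 < γ) (ha : 0 ≤ a)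
    (hab : d a b ≠ ⊤) :
    s γ b ^ 2 + γ * (d (s γ b) b).toReal + (a - s γ b) ^ 2 ≤ a ^ 2 + γ * (d a b).toReal := by
  have hfa : 0 ≤ γ * (d a b).toReal := mul_nonneg hγ.le (EReal.toReal_nonneg (hdb a ha).1)
  have hbb : d b b = 0 := (hdb b hb).2.2 rfl
  rcases hb.eq_or_lt with rfl | hb
  · simp [hs.zero_right, hbb, hfa]
  set σ := s γ b
  have hσ : σ ∈ Ioo 0 b := eigenMap_mem_Ioo hA4 hs hdb hb hγ
  have hroot : 2 * σ + γ * d₁ σ b = 0 := (hs.2 γ b hγ hb).2.1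
  -- the tangent line of `γ • d(·, b)` at `σ` has slope `-2σ`
  have htangent : ∀ a' ∈ Icc 0 b ∩ {a | d a b ≠ ⊤},
      γ * (d σ b).toReal ≤ γ * (d a' b).toReal + 2 * σ * (a' - σ) := by
    intro a' ha'
    have := (convexOn_generator hA4 hdb hb).add_mul_sub_le_of_hasDerivAt (x := σ)
      ⟨⟨hσ.1.le, hσ.2.le⟩, hA4.1 σ b hσ.1 hb⟩ ha' (hA4.2.1 σ b hσ.1 hb)
    have hslope : γ * d₁ σ b = -(2 * σ) := by linarith
    have := mul_le_mul_of_nonneg_left this hγ.le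
    rw [mul_add, ← mul_assoc, hslope] at this
    linarith
  rcases le_total a b with hle | hle
  · nlinarith [htangent a ⟨⟨ha, hle⟩, hab⟩]
  · have := htangent b ⟨⟨hb.le, le_rfl⟩, by simp [hbb]⟩
    simp only [hbb, EReal.toReal_zero, mul_zero, zero_add] at this
    nlinarith [hσ.1]

end Generator

section EigenMapLimits
variable {d : ℝ → ℝ → EReal} {d₁ d₂ s : ℝ → ℝ → ℝ} {b : ℝ}

theorem continuousAt_eigenMap (hA4 : Assumption4 d d₁ d₂) (hs : EigenMapSpec d₁ s)
    (hdb : IsDivergenceFrom d b) (hb : 0 ≤ b) {γ : ℝ} (hγ : 0 < γ) :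
    ContinuousAt (fun γ => s γ b) γ := by
  rcases hb.eq_or_lt with rfl | hb
  · simpa only [hs.zero_right] using continuousAt_const
  · exact ((eigenMap_strictMonoOn hA4 hs hdb hb).monotoneOn.continuousOn_of_image_Ioi_eq_Ioo
      (image_eigenMap hA4 hs hdb hb)).continuousAt (Ioi_mem_nhds hγ)

theorem tendsto_eigenMap_nhdsGT (hA4 : Assumption4 d d₁ d₂) (hs : EigenMapSpec d₁ s)
    (hdb : IsDivergenceFrom d b) (hb : 0 ≤ b) :
    Tendsto (fun γ => s γ b) (𝓝[>] 0) (𝓝 0) := by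
  rcases hb.eq_or_lt with rfl | hb
  · simpa only [hs.zero_right] using tendsto_const_nhds
  · exact (eigenMap_strictMonoOn hA4 hs hdb hb).monotoneOn.tendsto_nhdsGT_of_image_Ioi_eq_Ioo
      (image_eigenMap hA4 hs hdb hb)

theorem tendsto_eigenMap_atTop (hA4 : Assumption4 d d₁ d₂) (hs : EigenMapSpec d₁ s)
    (hdb : IsDivergenceFrom d b) (hb : 0 ≤ b) :
    Tendsto (fun γ => s γ b) atTop (𝓝 b) := by
  rcases hb.eq_or_lt with rfl | hb
  · simpa only [hs.zero_right] using tendsto_const_nhds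
  · exact (eigenMap_strictMonoOn hA4 hs hdb hb).monotoneOn.tendsto_atTop_of_image_Ioi_eq_Ioo
      (image_eigenMap hA4 hs hdb hb)

theorem tendsto_generator_eigenMap (hA4 : Assumption4 d d₁ d₂) (hs : EigenMapSpec d₁ s)
    (hdb : IsDivergenceFrom d b) (hb : 0 ≤ b)
    (hcont : 0 < b → ContinuousOn (fun a => d a b) (Ici 0))
    {l : Filter ℝ} [l.NeBot] (hl : ∀ᶠ γ in l, 0 < γ) {L : ℝ}
    (hL : Tendsto (fun γ => s γ b) l (𝓝 L)) :
    Tendsto (fun γ => d (s γ b) b) l (𝓝 (d L b)) := by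
  rcases hb.eq_or_lt with rfl | hb
  · have hL0 : L = 0 :=
      tendsto_nhds_unique hL (by simpa only [hs.zero_right] using tendsto_const_nhds)
    simpa only [hs.zero_right, hL0] using tendsto_const_nhds
  have hmem : ∀ᶠ γ in l, s γ b ∈ Ici 0 :=
    hl.mono fun γ hγ => (eigenMap_mem_Ioo hA4 hs hdb hb hγ).1.le
  exact (hcont hb L (isClosed_Ici.mem_of_tendsto hL hmem)).tendsto.comp
    (tendsto_nhdsWithin_iff.2 ⟨hL, hmem⟩)

end EigenMapLimits

section PVec
variable {p : ℕ} {d : ℝ → ℝ → EReal} {d₁ d₂ s : ℝ → ℝ → ℝ} {xh : Fin p → ℝ} {ε γ : ℝ}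

theorem sum_sq_add_sum_sq_sub_le (hA4 : Assumption4 d d₁ d₂) (hs : EigenMapSpec d₁ s)
    (hxh : ∀ i, 0 ≤ xh i) (hdiv : ∀ i, IsDivergenceFrom d (xh i)) (hγ : 0 < γ)
    (hroot : ∑ i, d (s γ (xh i)) (xh i) = ε) {y : Fin p → ℝ} (hy : ∀ i, 0 ≤ y i)
    (hyε : ∑ i, d (y i) (xh i) ≤ ε) :
    ∑ i, s γ (xh i) ^ 2 + ∑ i, (y i - s γ (xh i)) ^ 2 ≤ ∑ i, y i ^ 2 := by
  have hynn : ∀ i ∈ Finset.univ, 0 ≤ d (y i) (xh i) := fun i _ => (hdiv i _ (hy i)).1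
  have hsnn : ∀ i ∈ Finset.univ, 0 ≤ d (s γ (xh i)) (xh i) :=
    fun i _ => (hdiv i _ (hs.nonneg hγ (hxh i))).1
  have hyR : ∑ i, (d (y i) (xh i)).toReal ≤ ε := by
    rw [EReal.sum_eq_coe_sum_toReal_of_sum_le hynn hyε] at hyε
    exact_mod_cast hyε
  have hsR : ∑ i, (d (s γ (xh i)) (xh i)).toReal = ε := by
    rw [EReal.sum_eq_coe_sum_toReal_of_sum_le hsnn hroot.le] at hroot
    exact_mod_cast hroot
  have hcoord := Finset.sum_le_sum fun i (hi : i ∈ Finset.univ) =>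
    eigenMap_sq_add_le hA4 hs (hdiv i) (hxh i) hγ (hy i) (EReal.ne_top_of_sum_le_coe hynn hyε hi)
  simp only [Finset.sum_add_distrib, ← Finset.mul_sum, hsR] at hcoord
  nlinarith [mul_le_mul_of_nonneg_left hyR hγ.le]

theorem isPVecSol_eigenMap (hA4 : Assumption4 d d₁ d₂) (hs : EigenMapSpec d₁ s)
    (hxh : ∀ i, 0 ≤ xh i) (hdiv : ∀ i, IsDivergenceFrom d (xh i)) (hγ : 0 < γ)
    (hroot : ∑ i, d (s γ (xh i)) (xh i) = ε) : IsPVecSol d xh ε fun i => s γ (xh i) :=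
  ⟨fun i => hs.nonneg hγ (hxh i), hroot.le, fun _ hy hyε =>
    le_of_add_le_of_nonneg_left (sum_sq_add_sum_sq_sub_le hA4 hs hxh hdiv hγ hroot hy hyε)
      (Finset.sum_nonneg fun _ _ => sq_nonneg _)⟩

theorem eq_eigenMap_of_isPVecSol (hA4 : Assumption4 d d₁ d₂) (hs : EigenMapSpec d₁ s)
    (hxh : ∀ i, 0 ≤ xh i) (hdiv : ∀ i, IsDivergenceFrom d (xh i)) (hγ : 0 < γ)
    (hroot : ∑ i, d (s γ (xh i)) (xh i) = ε) {x : Fin p → ℝ} (hx : IsPVecSol d xh ε x) :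
    x = fun i => s γ (xh i) := by
  have hle := sum_sq_add_sum_sq_sub_le hA4 hs hxh hdiv hγ hroot hx.1 hx.2.1
  have hopt := hx.2.2 _ (fun i => hs.nonneg hγ (hxh i)) hroot.le
  have hzero : ∑ i, (x i - s γ (xh i)) ^ 2 = 0 :=
    le_antisymm (by linarith) (Finset.sum_nonneg fun _ _ => sq_nonneg _)
  funext i
  rw [Finset.sum_eq_zero_iff_of_nonneg fun _ _ => sq_nonneg _] at hzero
  exact sub_eq_zero.1 (pow_eq_zero_iff two_ne_zero |>.1 (hzero i (Finset.mem_univ i)))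

theorem exists_pos_of_lt_sum (hxh : ∀ i, 0 ≤ xh i) (hdiv : ∀ i, IsDivergenceFrom d (xh i))
    (hε : 0 < ε) (hεlt : (ε : EReal) < ∑ i, d 0 (xh i)) : ∃ i, 0 < xh i := by
  by_contra! h
  have hsum : ∑ i, d 0 (xh i) = 0 :=
    Finset.sum_eq_zero fun i _ => (hdiv i 0 le_rfl).2.2 (le_antisymm (hxh i) (h i))
  rw [hsum] at hεlt
  exact (lt_asymm hε) (by exact_mod_cast hεlt)

theorem exists_pos_sum_generator_eigenMap_eq (hA4 : Assumption4 d d₁ d₂)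
    (hs : EigenMapSpec d₁ s) (hxh : ∀ i, 0 ≤ xh i) (hdiv : ∀ i, IsDivergenceFrom d (xh i))
    (hcont : ∀ b, 0 < b → ContinuousOn (fun a => d a b) (Ici 0)) (hε : 0 < ε)
    (hεlt : (ε : EReal) < ∑ i, d 0 (xh i)) :
    ∃ γ, 0 < γ ∧ ∑ i, d (s γ (xh i)) (xh i) = ε := by
  set G : ℝ → EReal := fun γ => ∑ i, d (s γ (xh i)) (xh i)
  have hG : ∀ {l : Filter ℝ} [l.NeBot], (∀ᶠ γ in l, 0 < γ) → ∀ L : Fin p → ℝ,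
      (∀ i, Tendsto (fun γ => s γ (xh i)) l (𝓝 (L i))) →
      Tendsto G l (𝓝 (∑ i, d (L i) (xh i))) := by
    intro l _ hl L hL
    refine EReal.tendsto_finset_sum _
      (fun i _ => tendsto_generator_eigenMap hA4 hs (hdiv i) (hxh i) (hcont _) hl (hL i))
      fun i _ => (hdiv i).ne_bot ?_
    exact ge_of_tendsto (hL i) (hl.mono fun γ hγ => hs.nonneg hγ (hxh i))
  have hGcont : ContinuousOn G (Ioi 0) := fun γ hγ =>
    (show ContinuousAt G γ from hG (eventually_gt_nhds hγ) _ fun i =>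
      continuousAt_eigenMap hA4 hs (hdiv i) (hxh i) hγ).continuousWithinAt
  have hnear0 : ∀ᶠ γ in 𝓝[>] 0, (ε : EReal) < G γ :=
    (hG (l := 𝓝[>] 0) self_mem_nhdsWithin _ fun i =>
      tendsto_eigenMap_nhdsGT hA4 hs (hdiv i) (hxh i)).eventually (lt_mem_nhds hεlt)
  have hnearTop : ∀ᶠ γ in atTop, G γ < ε := by
    have := hG (eventually_gt_atTop 0) _ fun i => tendsto_eigenMap_atTop hA4 hs (hdiv i) (hxh i)
    rw [Finset.sum_eq_zero fun i _ => (hdiv i _ (hxh i)).2.2 rfl] at this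
    exact this.eventually (gt_mem_nhds (EReal.coe_pos.2 hε))
  obtain ⟨γ₀, hγ₀G, hγ₀⟩ := (hnear0.and self_mem_nhdsWithin).exists
  obtain ⟨γ₁, hγ₁G, hγ₁⟩ := (hnearTop.and (eventually_gt_atTop 0)).exists
  have hsub : uIcc γ₀ γ₁ ⊆ Ioi 0 := fun γ hγ => (lt_min hγ₀ hγ₁).trans_le hγ.1
  obtain ⟨γ, hγ, hGγ⟩ := intermediate_value_uIcc (hGcont.mono hsub)
    (mem_uIcc.2 (Or.inr ⟨hγ₁G.le, hγ₀G.le⟩))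
  exact ⟨γ, hsub hγ, hGγ⟩

end PVec

theorem stmt_3_general {p : ℕ}
    (D : Mat p → Mat p → EReal) (d : ℝ → ℝ → EReal) (d₁ d₂ s : ℝ → ℝ → ℝ)
    (xh : Fin p → ℝ) (ε : ℝ)
    (hnn : ∀ i, 0 ≤ xh i)
    (hDbasic : DivergenceBasic D)
    (hA2 : Assumption2 D d)
    (hA3 : Assumption3 d xh ε)
    (hA4 : Assumption4 d d₁ d₂)
    (hs : EigenMapSpec d₁ s) :
    (∃! γ : ℝ, 0 < γ ∧ (∑ i, d (s γ (xh i)) (xh i)) = (ε : EReal)) ∧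
    (∀ γs : ℝ, 0 < γs → (∑ i, d (s γs (xh i)) (xh i)) = (ε : EReal) →
      (IsPVecSol d xh ε (fun i => s γs (xh i)) ∧
        ∀ x : Fin p → ℝ, IsPVecSol d xh ε x → x = fun i => s γs (xh i)) ∧
      ∀ i, (0 < xh i → 0 < s γs (xh i) ∧ s γs (xh i) < xh i) ∧
           (xh i = 0 → s γs (xh i) = 0)) := by
  obtain ⟨hself, hε, hεlt⟩ := hA3
  have hdiv : ∀ i, IsDivergenceFrom d (xh i) :=
    fun i => isDivergenceFrom_of_spectral hDbasic hA2 i (hnn i) (hself i)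
  have hsol : ∀ γ, 0 < γ → ∑ i, d (s γ (xh i)) (xh i) = ε →
      IsPVecSol d xh ε (fun i => s γ (xh i)) ∧
        ∀ x : Fin p → ℝ, IsPVecSol d xh ε x → x = fun i => s γ (xh i) := fun γ hγ hroot =>
    ⟨isPVecSol_eigenMap hA4 hs hnn hdiv hγ hroot,
      fun _ hx => eq_eigenMap_of_isPVecSol hA4 hs hnn hdiv hγ hroot hx⟩
  obtain ⟨γ, hγ, hroot⟩ :=
    exists_pos_sum_generator_eigenMap_eq hA4 hs hnn hdiv hA2.2.2.1 hε hεlt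
  refine ⟨⟨γ, ⟨hγ, hroot⟩, fun γ' ⟨hγ', hroot'⟩ => ?_⟩, fun γs hγs hroot =>
    ⟨hsol γs hγs hroot, fun i => ⟨fun hi => eigenMap_mem_Ioo hA4 hs (hdiv i) hi hγs,
      fun hi => by rw [hi]; exact hs.zero_right⟩⟩⟩
  -- both roots give the unique solution, and `γ ↦ s γ b` is injective for `b > 0`
  obtain ⟨i, hi⟩ := exists_pos_of_lt_sum hnn hdiv hε hεlt
  have hsame := congrFun ((hsol γ hγ hroot).2 _ (hsol γ' hγ' hroot').1) i
  exact (eigenMap_strictMonoOn hA4 hs (hdiv i) hi).injOn hγ' hγ hsame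

/-- Proposition 3: solution of (P_Vec).
Under Assumptions 2, 3 and 4, problem (P_Vec) has a unique optimal solution given by
`x*ᵢ = s(γ*, x̂ᵢ)` where `γ*` is the unique positive root of `Σᵢ d(s(γ,x̂ᵢ),x̂ᵢ) = ε`;
moreover `0 < x*ᵢ < x̂ᵢ` whenever `x̂ᵢ > 0` and `x*ᵢ = 0` whenever `x̂ᵢ = 0`. -/
theorem stmt_3 {p : ℕ}
    (D : Mat p → Mat p → EReal) (d : ℝ → ℝ → EReal) (d₁ d₂ s : ℝ → ℝ → ℝ)
    (xh : Fin p → ℝ) (ε : ℝ)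
    (hmono : Monotone xh) (hnn : ∀ i, 0 ≤ xh i)
    (hDbasic : DivergenceBasic D)
    (hA2 : Assumption2 D d)
    (hA3 : Assumption3 d xh ε)
    (hA4 : Assumption4 d d₁ d₂)
    (hs : EigenMapSpec d₁ s) :
    (∃! γ : ℝ, 0 < γ ∧ (∑ i, d (s γ (xh i)) (xh i)) = (ε : EReal)) ∧
    (∀ γs : ℝ, 0 < γs → (∑ i, d (s γs (xh i)) (xh i)) = (ε : EReal) →
      (IsPVecSol d xh ε (fun i => s γs (xh i)) ∧
        ∀ x : Fin p → ℝ, IsPVecSol d xh ε x → x = fun i => s γs (xh i)) ∧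
      ∀ i, (0 < xh i → 0 < s γs (xh i) ∧ s γs (xh i) < xh i) ∧
           (xh i = 0 → s γs (xh i) = 0)) :=
  stmt_3_general D d d₁ d₂ s xh ε hnn hDbasic hA2 hA3 hA4 hs
end
end

section
/- Suppose the divergence generator d satisfies Assumptions 2, 4 and 5. Then for every γ > 0 and all b₁, b₂ ∈ (0,∞) with b₁ ≤ b₂, the eigenvalue map satisfies s(γ, b₂)/s(γ, b₁) ≤ b₂/b₁. -/
open Matrix Set Filter MeasureTheory
open scoped BigOperators Classical

noncomputable section

/-!
Write `c = s(γ,b₁)/b₁ < 1` and follow the ray `t ↦ (c t, t)`. The function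
`h(t) = 2ct + γ ∂d/∂a(ct,t)` vanishes at `t = b₁`, and Assumption 5 says exactly that
`t h'(t) - h(t) ≥ 0`, i.e. `h(t)/t` is nondecreasing; hence `h(b₂) ≥ 0`. Since `a ↦ ∂d/∂a(a,b₂)`
is nondecreasing below `b₂` (convexity) and `s(γ,b₂) < b₂`, the root `s(γ,b₂)` of
`a ↦ 2a + γ ∂d/∂a(a,b₂)` lies at or below `c b₂`, which is the claim.
-/

open Topology

theorem HasDerivAt.comp_of_continuousAt_partials {f f₁ f₂ : ℝ → ℝ → ℝ} {x y : ℝ → ℝ}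
    {x' y' t : ℝ}
    (hf₁ : ∀ᶠ v in 𝓝 (x t, y t), HasDerivAt (f · v.2) (f₁ v.1 v.2) v.1)
    (hf₂ : ∀ᶠ v in 𝓝 (x t, y t), HasDerivAt (f v.1 ·) (f₂ v.1 v.2) v.2)
    (hc₁ : ContinuousAt (Function.uncurry f₁) (x t, y t))
    (hc₂ : ContinuousAt (Function.uncurry f₂) (x t, y t))
    (hx : HasDerivAt x x' t) (hy : HasDerivAt y y' t) :
    HasDerivAt (fun t => f (x t) (y t)) (f₁ (x t) (y t) * x' + f₂ (x t) (y t) * y') t := by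
  have hsmulRight : Continuous fun r : ℝ => (1 : ℝ →L[ℝ] ℝ).smulRight r :=
    (ContinuousLinearMap.smulRightL ℝ ℝ ℝ 1).continuous
  have H := hasStrictFDerivAt_uncurry_coprod (u := (x t, y t)) (f := f)
    (f₁ := fun a b => (1 : ℝ →L[ℝ] ℝ).smulRight (f₁ a b))
    (f₂ := fun a b => (1 : ℝ →L[ℝ] ℝ).smulRight (f₂ a b))
    (hf₁.mono fun v hv => hv.hasFDerivAt) (hf₂.mono fun v hv => hv.hasFDerivAt)
    (hsmulRight.continuousAt.comp hc₁) (hsmulRight.continuousAt.comp hc₂)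
  refine (H.hasFDerivAt.comp_hasDerivAt t (hx.prodMk hy)).congr_deriv ?_
  simp [Function.HasUncurry.uncurry, mul_comm]

variable {d : ℝ → ℝ → EReal} {d₁ d₂ d₁b s : ℝ → ℝ → ℝ} {γ a b : ℝ}

namespace Assumption4

variable (hgen : GenBasic d) (hA4 : Assumption4 d d₁ d₂)
include hgen hA4

theorem coe_toReal (ha : 0 < a) (hb : 0 < b) : ((d a b).toReal : EReal) = d a b :=
  EReal.coe_toReal (hA4.1 a b ha hb) (ne_bot_of_le_ne_bot (by simp) (hgen.1 a b ha.le hb.le))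

theorem convexOn_toReal (hb : 0 < b) : ConvexOn ℝ (Ioc 0 b) (fun a => (d a b).toReal) := by
  refine ⟨convex_Ioc 0 b, fun x hx y hy μ ν hμ hν hμν => ?_⟩
  have hxy : μ * x + ν * y ∈ Ioc 0 b := convex_Ioc 0 b hx hy hμ hν hμν
  have H := hA4.2.2.2.2 b hb x (Ioc_subset_Icc_self hx) y (Ioc_subset_Icc_self hy) μ
    ⟨hμ, by linarith⟩
  rw [show 1 - μ = ν by linarith] at H
  rw [← coe_toReal hgen hA4 hx.1 hb, ← coe_toReal hgen hA4 hy.1 hb,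
    ← coe_toReal hgen hA4 hxy.1 hb, ← EReal.coe_mul, ← EReal.coe_mul, ← EReal.coe_add,
    EReal.coe_le_coe_iff] at H
  exact H

theorem toReal_pos (ha : 0 < a) (hb : 0 < b) (hab : a ≠ b) : 0 < (d a b).toReal := by
  refine (EReal.toReal_nonneg (hgen.1 a b ha.le hb.le)).lt_of_ne fun h => hab ?_
  refine (hgen.2.1 a b ha.le hb.le (hA4.1 a b ha hb)).1 ?_
  rw [← coe_toReal hgen hA4 ha hb, ← h, EReal.coe_zero]

theorem toReal_self (hb : 0 < b) : (d b b).toReal = 0 := by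
  rw [(hgen.2.1 b b hb.le hb.le (hA4.1 b b hb hb)).2 rfl, EReal.toReal_zero]

theorem deriv_self (hb : 0 < b) : d₁ b b = 0 := by
  refine IsLocalMin.hasDerivAt_eq_zero ?_ (hA4.2.1 b b hb hb)
  filter_upwards [Ioi_mem_nhds hb] with a ha
  rw [toReal_self hgen hA4 hb]
  exact EReal.toReal_nonneg (hgen.1 a b (le_of_lt ha) hb.le)

theorem deriv_neg (ha : 0 < a) (hab : a < b) : d₁ a b < 0 := by
  have hb := ha.trans hab
  calc d₁ a b ≤ slope (fun a => (d a b).toReal) a b :=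
        (convexOn_toReal hgen hA4 hb).le_slope_of_hasDerivAt ⟨ha, hab.le⟩ ⟨hb, le_rfl⟩ hab
          (hA4.2.1 a b ha hb)
    _ = -(d a b).toReal / (b - a) := by rw [slope_def_field, toReal_self hgen hA4 hb, zero_sub]
    _ < 0 := div_neg_of_neg_of_pos (neg_neg_of_pos (toReal_pos hgen hA4 ha hb hab.ne))
        (sub_pos.2 hab)

theorem deriv_mono {x y : ℝ} (hx : 0 < x) (hxy : x ≤ y) (hyb : y ≤ b) : d₁ x b ≤ d₁ y b := by
  rcases hxy.eq_or_lt with rfl | hxy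
  · rfl
  have hy := hx.trans hxy
  have hb := hy.trans_le hyb
  have hconv := convexOn_toReal hgen hA4 hb
  have hxS : x ∈ Ioc 0 b := ⟨hx, hxy.le.trans hyb⟩
  exact (hconv.le_slope_of_hasDerivAt hxS ⟨hy, hyb⟩ hxy (hA4.2.1 x b hx hb)).trans
    (hconv.slope_le_of_hasDerivAt hxS ⟨hy, hyb⟩ hxy (hA4.2.1 y b hy hb))

end Assumption4

namespace EigenMapSpec

variable (hs : EigenMapSpec d₁ s) (hgen : GenBasic d) (hA4 : Assumption4 d d₁ d₂)
include hs hgen hA4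

/-- `2a + γ ∂d/∂a(a,b)` is negative near `a = 0` (as `∂d/∂a(·,b)` is nondecreasing and negative
on `(0,b)`) and equals `2b` at `a = b`, so it has a root in `(0,b)`, which by uniqueness is `s(γ,b)`. -/
theorem lt_self (hγ : 0 < γ) (hb : 0 < b) : s γ b < b := by
  set m := d₁ (b / 2) b
  have hm : m < 0 := hA4.deriv_neg hgen (by positivity) (by linarith)
  set a₀ := min (b / 2) (-(γ * m) / 4)
  have ha₀ : 0 < a₀ := lt_min (by positivity) (by nlinarith)
  have ha₀b : a₀ < b := (min_le_left _ _).trans_lt (by linarith)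
  have hcont : ContinuousOn (fun a => 2 * a + γ * d₁ a b) (Icc a₀ b) := fun a ha =>
    ((continuousAt_const.mul continuousAt_id).add (continuousAt_const.mul
      (hA4.2.2.1 a b (ha₀.trans_le ha.1) hb).continuousAt)).continuousWithinAt
  have hneg : 2 * a₀ + γ * d₁ a₀ b < 0 := by
    have hmono : d₁ a₀ b ≤ m := hA4.deriv_mono hgen ha₀ (min_le_left _ _) (by linarith)
    have ha₀m : a₀ ≤ -(γ * m) / 4 := min_le_right _ _
    nlinarith
  have hpos : 0 < 2 * b + γ * d₁ b b := by rw [hA4.deriv_self hgen hb]; linarith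
  obtain ⟨r, hr, hr0⟩ := intermediate_value_Ioo ha₀b.le hcont ⟨hneg, hpos⟩
  rw [← (hs.2 γ b hγ hb).2.2 r (ha₀.trans hr.1).le hr0]
  exact hr.2

theorem le_of_nonneg (hγ : 0 < γ) (hb : 0 < b) (ha : 0 < a) (h : 0 ≤ 2 * a + γ * d₁ a b) :
    s γ b ≤ a := by
  obtain ⟨-, hroot, -⟩ := hs.2 γ b hγ hb
  by_contra! hlt
  have hmono := hA4.deriv_mono hgen ha hlt.le (hs.lt_self hgen hA4 hγ hb).le
  nlinarith

end EigenMapSpec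

namespace Assumption5

variable (hA4 : Assumption4 d d₁ d₂) (hA5 : Assumption5 d₁ d₂ d₁b)
include hA4 hA5

theorem hasDerivAt_comp_ray {c t : ℝ} (hc : 0 < c) (ht : 0 < t) :
    HasDerivAt (fun t => d₁ (c * t) t) (d₂ (c * t) t * c + d₁b (c * t) t) t := by
  have hquad : Ioi (0 : ℝ) ×ˢ Ioi (0 : ℝ) ∈ 𝓝 (c * t, t) :=
    (isOpen_Ioi.prod isOpen_Ioi).mem_nhds ⟨mul_pos hc ht, ht⟩
  have H := HasDerivAt.comp_of_continuousAt_partials (f := d₁) (x := (c * ·)) (y := id)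
    (Filter.mem_of_superset hquad fun v hv => hA4.2.2.1 v.1 v.2 hv.1 hv.2)
    (Filter.mem_of_superset hquad fun v hv => hA5.1 v.1 v.2 hv.1 hv.2)
    (hA5.2.1.continuousAt hquad) (hA5.2.2.1.continuousAt hquad)
    ((hasDerivAt_id t).const_mul c) (hasDerivAt_id t)
  simpa using H

theorem monotoneOn_div_ray {c : ℝ} (hc : 0 < c) (hc₁ : c < 1) (hγ : 0 ≤ γ) :
    MonotoneOn (fun t => (2 * (c * t) + γ * d₁ (c * t) t) / t) (Ioi 0) := by
  have hderiv : ∀ t ∈ Ioi (0 : ℝ), HasDerivAt (fun t => (2 * (c * t) + γ * d₁ (c * t) t) / t)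
      (((2 * c + γ * (d₂ (c * t) t * c + d₁b (c * t) t)) * t
        - (2 * (c * t) + γ * d₁ (c * t) t) * 1) / t ^ 2) t := fun t ht =>
    ((((hasDerivAt_id t).const_mul c).const_mul 2 |>.congr_deriv (by ring)).add
      ((hA5.hasDerivAt_comp_ray hA4 hc ht).const_mul γ)).div (hasDerivAt_id t) ht.ne'
  refine monotoneOn_of_hasDerivWithinAt_nonneg (convex_Ioi 0)
    (fun t ht => (hderiv t ht).continuousAt.continuousWithinAt)
    (fun t ht => (hderiv t (interior_subset ht)).hasDerivWithinAt) fun t ht => ?_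
  rw [interior_Ioi] at ht
  have hct : c * t < t := by nlinarith [mem_Ioi.1 ht]
  have hA5ineq := hA5.2.2.2 (c * t) t (mul_pos hc ht) hct
  refine div_nonneg ?_ (sq_nonneg t)
  nlinarith [mul_nonneg hγ (sub_nonneg.2 hA5ineq)]

end Assumption5

/-- Lemma: generalized monotonicity of the eigenvalue map.
Under Assumptions 2, 4 and 5 for the generator, `s(γ,b₂)/s(γ,b₁) ≤ b₂/b₁` for all
`γ > 0` and `0 < b₁ ≤ b₂`. -/
theorem stmt_7
    (d : ℝ → ℝ → EReal) (d₁ d₂ d₁b s : ℝ → ℝ → ℝ)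
    (hgen : GenBasic d)
    (hA4 : Assumption4 d d₁ d₂)
    (hA5 : Assumption5 d₁ d₂ d₁b)
    (hs : EigenMapSpec d₁ s) :
    ∀ γ : ℝ, 0 < γ → ∀ b₁ b₂ : ℝ, 0 < b₁ → b₁ ≤ b₂ →
      s γ b₂ / s γ b₁ ≤ b₂ / b₁ := by
  intro γ hγ b₁ b₂ hb₁ hb₁₂
  have hb₂ : 0 < b₂ := hb₁.trans_le hb₁₂
  obtain ⟨hs₁_nonneg, hs₁_root, -⟩ := hs.2 γ b₁ hγ hb₁
  rcases hs₁_nonneg.eq_or_lt with hs₁_zero | hs₁_pos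
  · rw [← hs₁_zero, div_zero]
    positivity
  set c := s γ b₁ / b₁
  have hc : 0 < c := div_pos hs₁_pos hb₁
  have hc₁ : c < 1 := (div_lt_one hb₁).2 (hs.lt_self hgen hA4 hγ hb₁)
  have hcb₁ : c * b₁ = s γ b₁ := div_mul_cancel₀ _ hb₁.ne'
  have hray : 0 ≤ 2 * (c * b₂) + γ * d₁ (c * b₂) b₂ := by
    have hmono : (2 * (c * b₁) + γ * d₁ (c * b₁) b₁) / b₁
        ≤ (2 * (c * b₂) + γ * d₁ (c * b₂) b₂) / b₂ :=
      hA5.monotoneOn_div_ray hA4 hc hc₁ hγ.le (mem_Ioi.2 hb₁) (mem_Ioi.2 hb₂) hb₁₂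
    rwa [hcb₁, hs₁_root, zero_div, le_div_iff₀ hb₂, zero_mul] at hmono
  have hs₂ : s γ b₂ ≤ c * b₂ := hs.le_of_nonneg hgen hA4 hγ hb₂ (mul_pos hc hb₂) hray
  calc s γ b₂ / s γ b₁ ≤ c * b₂ / s γ b₁ := by gcongr
    _ = b₂ / b₁ := by rw [← hcb₁, mul_div_mul_left b₂ b₁ hc.ne']
end
end
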